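/- Let L be a block with |L| ≥ 2. If an assignment {t_b}_{b∈L} solves problem (B) and satisfies t_b ≥ r_b for all b ∈ L, then for all m, n ∈ L with r_m < r_n one has t_m < t_n. -/

import Mathlib

/-- `betaP p t r = ∑_{i=0}^{r-1} C(t,i) (1-p)^i p^(t-i)`. -/
noncomputable def betaP (p : ℝ) (t r : ℕ) : ℝ :=
  ∑ i ∈ Finset.range r, (t.choose i : ℝ) * (1 - p) ^ i * p ^ (t - i)

/-- Expected rank function `E(r,t) = ∑_{i=0}^{t} C(t,i) (1-p)^i p^(t-i) * min{i,r}`. -/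
noncomputable def expRank (p : ℝ) (r t : ℕ) : ℝ :=
  ∑ i ∈ Finset.range (t + 1),
    (t.choose i : ℝ) * (1 - p) ^ i * p ^ (t - i) * ((min i r : ℕ) : ℝ)

/-!
Conditioning on the last packet, sending one more packet to a member of rank `r` that already
received `t` packets raises its expected rank by `(1 - p) * betaP p t r`, where `betaP p t r` is
the probability that fewer than `r` of the `t` packets arrive. This marginal gain decreases in `t`
and increases in `r`, and strictly so along the diagonal: `betaP p s u < betaP p (s + 1) (u + 1)`
for `u ≤ s`. So if `r m < r n ≤ t n ≤ t m`, then
`betaP p (t m - 1) (r m) ≤ betaP p (t n - 1) (r n - 1) < betaP p (t n) (r n)`, and moving one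
packet from `m` to `n` strictly increases the objective, contradicting optimality.
-/

open Finset Function

namespace Finset

variable {ι M α : Type*}

lemma sum_update_add [DecidableEq ι] [AddCommMonoid M] {s : Finset ι} {i : ι} (h : i ∈ s)
    (g : ι → M) (x : M) : ∑ j ∈ s, update g i x j + g i = ∑ j ∈ s, g j + x := by
  rw [← add_sum_erase s g h, ← add_sum_erase s _ h, update_self,
    sum_congr rfl fun j hj => update_of_ne (ne_of_mem_erase hj) _ _]
  ac_rfl

lemma sum_apply_update_update_add [DecidableEq ι] [AddCommMonoid M] {s : Finset ι} {m n : ι}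
    (hm : m ∈ s) (hn : n ∈ s) (hmn : m ≠ n) (F : ι → α → M) (t : ι → α) (a c : α) :
    ∑ b ∈ s, F b (update (update t m a) n c b) + F m (t m) + F n (t n) =
      ∑ b ∈ s, F b (t b) + F m a + F n c := by
  have hm' := sum_update_add hm (fun b => F b (t b)) (F m a)
  have hn' := sum_update_add hn (fun b => F b (update t m a b)) (F n c)
  simp only [← apply_update F, update_of_ne hmn.symm] at hm' hn'
  rw [add_right_comm, hn', add_right_comm, hm']

end Finset

/-- `binomExpect p t g` is the expectation of `g X` for `X ~ Binomial(t, 1 - p)`. -/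
noncomputable def binomExpect (p : ℝ) (t : ℕ) (g : ℕ → ℝ) : ℝ :=
  ∑ i ∈ range (t + 1), (t.choose i : ℝ) * (1 - p) ^ i * p ^ (t - i) * g i

section binomExpect

variable {p : ℝ}

lemma binomExpect_add (t : ℕ) (f g : ℕ → ℝ) :
    binomExpect p t (fun i => f i + g i) = binomExpect p t f + binomExpect p t g := by
  simp only [binomExpect, mul_add, sum_add_distrib]

lemma binomExpect_succ (t : ℕ) (g : ℕ → ℝ) :
    binomExpect p (t + 1) g =
      p * binomExpect p t g + (1 - p) * binomExpect p t (fun i => g (i + 1)) := by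
  have pascal := sum_choose_succ_mul (fun i j => (1 - p) ^ i * p ^ j * g i) t
  simp only [binomExpect, mul_sum]
  calc _ = ∑ i ∈ range (t + 2), ((t + 1).choose i : ℝ) * ((1 - p) ^ i * p ^ (t + 1 - i) * g i) :=
        sum_congr rfl fun i _ => by ring
    _ = _ := pascal
    _ = _ := by
      congr 1 <;> refine sum_congr rfl fun i hi => ?_
      · rw [Nat.sub_add_comm (Nat.lt_succ_iff.1 (mem_range.1 hi)), pow_succ]
        ring
      · ring

lemma expRank_eq_binomExpect (r t : ℕ) :
    expRank p r t = binomExpect p t (fun i => ((min i r : ℕ) : ℝ)) := rfl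

lemma betaP_eq_binomExpect (t r : ℕ) :
    betaP p t r = binomExpect p t (fun i => if i < r then 1 else 0) := by
  simp only [betaP, binomExpect, mul_ite, mul_one, mul_zero]
  rw [← sum_filter]
  refine (sum_subset (fun i hi => mem_range.2 (mem_filter.1 hi).2) fun i hi hi' => ?_).symm
  have hti : t < i := by
    by_contra!
    exact hi' (mem_filter.2 ⟨mem_range.2 (Nat.lt_succ_of_le this), mem_range.1 hi⟩)
  simp [Nat.choose_eq_zero_of_lt hti]

end binomExpect

section betaP

variable {p : ℝ}

lemma expRank_succ (r t : ℕ) :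
    expRank p r (t + 1) = expRank p r t + (1 - p) * betaP p t r := by
  have hmin : ∀ i, ((min (i + 1) r : ℕ) : ℝ) = (min i r : ℕ) + if i < r then 1 else 0 := by
    intro i
    split_ifs <;> norm_cast <;> omega
  simp only [expRank_eq_binomExpect, binomExpect_succ, hmin, binomExpect_add,
    ← betaP_eq_binomExpect]
  ring

lemma betaP_succ_succ (t r : ℕ) :
    betaP p (t + 1) (r + 1) = p * betaP p t (r + 1) + (1 - p) * betaP p t r := by
  simp only [betaP_eq_binomExpect, binomExpect_succ, Nat.add_lt_add_iff_right]

lemma binom_term_nonneg (hp0 : 0 ≤ p) (hp1 : p ≤ 1) (t i : ℕ) :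
    0 ≤ (t.choose i : ℝ) * (1 - p) ^ i * p ^ (t - i) := by
  have : 0 ≤ 1 - p := sub_nonneg.2 hp1
  positivity

lemma betaP_mono_right (hp0 : 0 ≤ p) (hp1 : p ≤ 1) (t : ℕ) : Monotone (betaP p t) :=
  fun _ _ h => sum_le_sum_of_subset_of_nonneg (range_subset_range.2 h)
    fun i _ _ => binom_term_nonneg hp0 hp1 t i

lemma betaP_succ_left_le (hp0 : 0 ≤ p) (hp1 : p ≤ 1) (t r : ℕ) :
    betaP p (t + 1) r ≤ betaP p t r := by
  cases r with
  | zero => simp [betaP]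
  | succ r =>
    have := mul_le_mul_of_nonneg_left (betaP_mono_right hp0 hp1 t r.le_succ) (sub_nonneg.2 hp1)
    rw [betaP_succ_succ]
    linarith

lemma betaP_anti_left (hp0 : 0 ≤ p) (hp1 : p ≤ 1) (r : ℕ) : Antitone (betaP p · r) :=
  antitone_nat_of_succ_le fun t => betaP_succ_left_le hp0 hp1 t r

/-- The diagonal step gains `p * C(s,u) (1-p)^u p^(s-u)`, which is positive as `u ≤ s`. -/
lemma betaP_lt_betaP_succ_succ (hp0 : 0 < p) (hp1 : p < 1) {s u : ℕ} (h : u ≤ s) :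
    betaP p s u < betaP p (s + 1) (u + 1) := by
  have hterm : 0 < (s.choose u : ℝ) * (1 - p) ^ u * p ^ (s - u) := by
    have : 0 < 1 - p := sub_pos.2 hp1
    have : (0 : ℝ) < s.choose u := mod_cast Nat.choose_pos h
    positivity
  have hstep : betaP p s (u + 1) = betaP p s u + s.choose u * (1 - p) ^ u * p ^ (s - u) :=
    sum_range_succ _ _
  rw [betaP_succ_succ, hstep]
  linarith [mul_pos hp0 hterm]

lemma betaP_lt_betaP (hp0 : 0 < p) (hp1 : p < 1) {t t' r r' : ℕ} (hr : r < r') (hrt : r' ≤ t')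
    (ht : t' ≤ t + 1) : betaP p t r < betaP p t' r' := by
  obtain ⟨u, rfl⟩ : ∃ u, r' = u + 1 := Nat.exists_eq_add_one.2 (by omega)
  obtain ⟨s, rfl⟩ : ∃ s, t' = s + 1 := Nat.exists_eq_add_one.2 (by omega)
  calc betaP p t r ≤ betaP p s r := betaP_anti_left hp0.le hp1.le r (by omega)
    _ ≤ betaP p s u := betaP_mono_right hp0.le hp1.le s (by omega)
    _ < betaP p (s + 1) (u + 1) := betaP_lt_betaP_succ_succ hp0 hp1 (by omega)

end betaP

theorem stmt11_general {ι : Type*} (p : ℝ) (hp0 : 0 < p) (hp1 : p < 1)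
    (L : Finset ι) (r : ι → ℕ) (tmax : ℕ)
    (t : ι → ℕ) (hfeas : (∑ b ∈ L, t b) = tmax)
    (hopt : ∀ t' : ι → ℕ, (∑ b ∈ L, t' b) = tmax →
      ∑ b ∈ L, expRank p (r b) (t' b) ≤ ∑ b ∈ L, expRank p (r b) (t b))
    (hge : ∀ b ∈ L, r b ≤ t b) :
    ∀ m ∈ L, ∀ n ∈ L, r m < r n → t m < t n := by
  classical
  intro m hm n hn hr
  by_contra! hle
  have hmn : m ≠ n := by rintro rfl; exact hr.false
  obtain ⟨k, hk⟩ : ∃ k, t m = k + 1 := Nat.exists_eq_add_one.2 (by have := hge n hn; omega)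
  have hcount := sum_apply_update_update_add hm hn hmn (fun _ x => x) t k (t n + 1)
  have hvalue := sum_apply_update_update_add hm hn hmn (fun b => expRank p (r b)) t k (t n + 1)
  have hopt' := hopt (update (update t m k) n (t n + 1)) (by omega)
  have hgain : betaP p k (r m) < betaP p (t n) (r n) :=
    betaP_lt_betaP hp0 hp1 hr (hge n hn) (by omega)
  rw [hk, expRank_succ, expRank_succ] at hvalue
  linarith [mul_lt_mul_of_pos_left hgain (sub_pos.2 hp1)]

theorem stmt11 {ι : Type*} (p : ℝ) (hp0 : 0 < p) (hp1 : p < 1)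
    (L : Finset ι) (hcard : 2 ≤ L.card) (r : ι → ℕ) (tmax : ℕ)
    (t : ι → ℕ) (hfeas : (∑ b ∈ L, t b) = tmax)
    (hopt : ∀ t' : ι → ℕ, (∑ b ∈ L, t' b) = tmax →
      ∑ b ∈ L, expRank p (r b) (t' b) ≤ ∑ b ∈ L, expRank p (r b) (t b))
    (hge : ∀ b ∈ L, r b ≤ t b) :
    ∀ m ∈ L, ∀ n ∈ L, r m < r n → t m < t n :=
  stmt11_general p hp0 hp1 L r tmax t hfeas hopt hge
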